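/- Let b, d be positive integers with d even, L a finite set, and T' a signature tree of branching b' = b·|L|^(d/2+1) (every node has exactly b' children). For any inner labelling λ of T' by L, there is a subtree T ⊆ T' with branching exactly b such that λ restricted to T is constant per level: for each even level x, all nodes of T at level x receive the same label. -/

import Mathlib

/-!
Induction on the depth, strengthened to branching *at least* `b·k^(e+1)` (`k = |L|`) and to
recording the constant labels as a profile `Fin (e+1) → L`. Below each child of the root the
induction hypothesis gives a subtree of branching `b` with some profile. The root has at least
`b` times as many children as there are profiles of depth `e - 1`, so by pigeonhole `b` children
share a profile, and grafting their subtrees under the root gives the required tree.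
-/

/-- The set of children values of the node of `T` given by the length-`x` prefix of
`s` (signature trees of depth `e` are encoded as sets of tuples `Fin e → ℕ`;
levels of the paper, indexed by even numbers `≤ d = 2e`, correspond to prefix
lengths `x ≤ e`). -/
def childSet {e : ℕ} (T : Set (Fin e → ℕ)) (x : Fin e) (s : Fin e → ℕ) : Set ℕ :=
  {c | ∃ t ∈ T, (∀ i : Fin e, (i : ℕ) < (x : ℕ) → t i = s i) ∧ t x = c}

/-- The tree `T` has branching exactly `b`: every node has exactly `b` children. -/
def HasBranching {e : ℕ} (T : Set (Fin e → ℕ)) (b : ℕ) : Prop :=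
  T.Nonempty ∧ ∀ x : Fin e, ∀ s ∈ T, (childSet T x s).ncard = b

/-- The inner labelling `lab` is constant per level on `T`: any two nodes of `T`
at the same level receive the same label. -/
def ConstPerLevel {e : ℕ} {L : Type} (T : Set (Fin e → ℕ))
    (lab : (x : Fin (e + 1)) → (Fin (x : ℕ) → ℕ) → L) : Prop :=
  ∀ x : Fin (e + 1), ∀ s ∈ T, ∀ t ∈ T,
    lab x (fun i => s ⟨(i : ℕ), by have h1 := i.isLt; have h2 := x.isLt; omega⟩) =
      lab x (fun i => t ⟨(i : ℕ), by have h1 := i.isLt; have h2 := x.isLt; omega⟩)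

def subtreeAt {e : ℕ} (T : Set (Fin (e + 1) → ℕ)) (c : ℕ) : Set (Fin e → ℕ) :=
  {t | Fin.cons c t ∈ T}

def graft {e : ℕ} (S : Set ℕ) (U : ℕ → Set (Fin e → ℕ)) : Set (Fin (e + 1) → ℕ) :=
  {u | u 0 ∈ S ∧ Fin.tail u ∈ U (u 0)}

theorem Fin.take_succ_eq_cons {n m : ℕ} {α : Type*} (h : m + 1 ≤ n + 1) (v : Fin (n + 1) → α) :
    Fin.take (m + 1) h v = Fin.cons (v 0) (Fin.take m (Nat.le_of_succ_le_succ h) (Fin.tail v)) := by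
  ext i
  refine Fin.cases ?_ (fun j => ?_) i <;> rfl

section Trees

variable {e : ℕ}

theorem childSet_zero (T : Set (Fin (e + 1) → ℕ)) (s : Fin (e + 1) → ℕ) :
    childSet T 0 s = (· 0) '' T := by
  ext c
  simp [childSet]

theorem childSet_succ (T : Set (Fin (e + 1) → ℕ)) (y : Fin e) (s : Fin (e + 1) → ℕ) :
    childSet T y.succ s = childSet (subtreeAt T (s 0)) y (Fin.tail s) := by
  ext c
  constructor
  · rintro ⟨t, ht, hpre, rfl⟩
    have h0 : t 0 = s 0 := hpre 0 (Nat.succ_pos _)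
    refine ⟨Fin.tail t, ?_, fun i hi => hpre i.succ (Nat.succ_lt_succ hi), rfl⟩
    rwa [subtreeAt, Set.mem_ofPred_eq, ← h0, Fin.cons_self_tail]
  · rintro ⟨t, ht, hpre, rfl⟩
    refine ⟨Fin.cons (s 0) t, ht, fun i hi => ?_, rfl⟩
    induction i using Fin.cases with
    | zero => rfl
    | succ j => exact hpre j (Nat.lt_of_succ_lt_succ hi)

theorem subtreeAt_nonempty {T : Set (Fin (e + 1) → ℕ)} {c : ℕ} (hc : c ∈ (· 0) '' T) :
    (subtreeAt T c).Nonempty := by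
  obtain ⟨t, ht, rfl⟩ := hc
  exact ⟨Fin.tail t, by simpa [subtreeAt] using ht⟩

theorem le_ncard_childSet_subtreeAt {T : Set (Fin (e + 1) → ℕ)} {n : ℕ}
    (hT : ∀ x, ∀ s ∈ T, n ≤ (childSet T x s).ncard) (c : ℕ) :
    ∀ y, ∀ t ∈ subtreeAt T c, n ≤ (childSet (subtreeAt T c) y t).ncard := by
  intro y t ht
  simpa [childSet_succ] using hT y.succ _ ht

theorem graft_subset {T : Set (Fin (e + 1) → ℕ)} {S : Set ℕ} {U : ℕ → Set (Fin e → ℕ)}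
    (hU : ∀ c ∈ S, U c ⊆ subtreeAt T c) : graft S U ⊆ T := by
  rintro u ⟨hu0, hu⟩
  simpa [subtreeAt] using hU _ hu0 hu

theorem subtreeAt_graft {S : Set ℕ} {U : ℕ → Set (Fin e → ℕ)} {c : ℕ} (hc : c ∈ S) :
    subtreeAt (graft S U) c = U c := by
  ext t
  simp [subtreeAt, graft, hc]

theorem image_graft {S : Set ℕ} {U : ℕ → Set (Fin e → ℕ)} (hU : ∀ c ∈ S, (U c).Nonempty) :
    (· 0) '' graft S U = S := by
  ext c
  constructor
  · rintro ⟨u, ⟨hu0, -⟩, rfl⟩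
    exact hu0
  · intro hc
    obtain ⟨t, ht⟩ := hU c hc
    exact ⟨Fin.cons c t, by simpa [graft, hc] using ht, rfl⟩

theorem hasBranching_graft {S : Set ℕ} {U : ℕ → Set (Fin e → ℕ)} {b : ℕ} (hb : 0 < b)
    (hS : S.ncard = b) (hU : ∀ c ∈ S, HasBranching (U c) b) : HasBranching (graft S U) b := by
  have hUne : ∀ c ∈ S, (U c).Nonempty := fun c hc => (hU c hc).1
  constructor
  · rw [← Set.image_nonempty (f := (· 0)), image_graft hUne]
    exact Set.nonempty_of_ncard_ne_zero (hS ▸ hb.ne')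
  · intro x s hs
    induction x using Fin.cases with
    | zero => rw [childSet_zero, image_graft hUne, hS]
    | succ y =>
      rw [childSet_succ, subtreeAt_graft hs.1]
      exact (hU _ hs.1).2 y _ hs.2

end Trees

theorem Set.exists_subset_ncard_eq_forall_eq_of_mul_le_ncard {α β : Type*} [Fintype β]
    [Nonempty β] {s : Set α} {b : ℕ} (g : α → β) (h : b * Fintype.card β ≤ s.ncard) :
    ∃ S ⊆ s, S.ncard = b ∧ ∃ y, ∀ a ∈ S, g a = y := by
  classical
  rcases Nat.eq_zero_or_pos b with rfl | hb
  · exact ⟨∅, Set.empty_subset _, Set.ncard_empty _, Classical.arbitrary β, by simp⟩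
  have hs : s.Finite := Set.finite_of_ncard_pos (h.trans_lt' (by positivity))
  obtain ⟨y, -, hy⟩ := Finset.exists_le_card_fiber_of_mul_le_card_of_maps_to
    (s := hs.toFinset) (t := Finset.univ) (f := g) (fun a _ => Finset.mem_univ _)
    Finset.univ_nonempty (by rwa [Finset.card_univ, mul_comm, ← Set.ncard_eq_toFinset_card _ hs])
  obtain ⟨S, hSs, rfl⟩ := Finset.exists_subset_card_eq hy
  refine ⟨S, fun a ha => ?_, Set.ncard_coe_finset S, y, fun a ha => ?_⟩
  · simpa using (Finset.mem_filter.mp (hSs ha)).1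
  · exact (Finset.mem_filter.mp (hSs ha)).2

theorem exists_subset_hasBranching_forall_lab_eq {L : Type} [Fintype L] {b : ℕ} (hb : 0 < b)
    {e : ℕ} (T' : Set (Fin e → ℕ)) (lab : (x : Fin (e + 1)) → (Fin (x : ℕ) → ℕ) → L)
    (hT' : T'.Nonempty)
    (hbr : ∀ x, ∀ s ∈ T', b * Fintype.card L ^ (e + 1) ≤ (childSet T' x s).ncard) :
    ∃ T ⊆ T', HasBranching T b ∧
      ∃ f : Fin (e + 1) → L, ∀ x, ∀ s ∈ T, lab x (Fin.take x x.is_le s) = f x := by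
  induction e with
  | zero =>
    obtain ⟨s₀, hs₀⟩ := hT'
    refine ⟨T', subset_rfl, ⟨⟨s₀, hs₀⟩, fun x => x.elim0⟩, fun x => lab x (Fin.take x x.is_le s₀),
      fun x s _ => ?_⟩
    rw [Subsingleton.elim s s₀]
  | succ e ih =>
    have : Nonempty L := ⟨lab 0 Fin.elim0⟩
    have hmono : b * Fintype.card L ^ (e + 1) ≤ b * Fintype.card L ^ (e + 2) :=
      Nat.mul_le_mul_left _ (Nat.pow_le_pow_right Fintype.card_pos (Nat.le_succ _))
    set C := (· 0) '' T'
    have hC : b * Fintype.card L ^ (e + 2) ≤ C.ncard := by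
      obtain ⟨s, hs⟩ := hT'
      simpa [C, childSet_zero] using hbr 0 s hs
    have hsub : ∀ c ∈ C, ∃ U ⊆ subtreeAt T' c, HasBranching U b ∧ ∃ f : Fin (e + 1) → L,
        ∀ x : Fin (e + 1), ∀ t ∈ U, lab x.succ (Fin.cons c (Fin.take x x.is_le t)) = f x := by
      intro c hc
      refine ih _ (fun x p => lab x.succ (Fin.cons c p)) (subtreeAt_nonempty hc) fun x t ht => ?_
      exact hmono.trans (le_ncard_childSet_subtreeAt hbr c x t ht)
    choose! U hUsub hU f hf using hsub
    obtain ⟨S, hSC, hS, f₀, hSf⟩ := Set.exists_subset_ncard_eq_forall_eq_of_mul_le_ncard f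
      (by rw [Fintype.card_fun, Fintype.card_fin]; exact hmono.trans hC)
    refine ⟨graft S U, graft_subset fun c hc => hUsub c (hSC hc),
      hasBranching_graft hb hS fun c hc => hU c (hSC hc), Fin.cons (lab 0 Fin.elim0) f₀, ?_⟩
    rintro x s ⟨hs0, hs⟩
    induction x using Fin.cases with
    | zero => exact congrArg (lab 0) (funext fun i => i.elim0)
    | succ y =>
      rw [Fin.cons_succ, ← hSf _ hs0, ← hf _ (hSC hs0) y _ hs]
      exact congrArg (lab y.succ) (Fin.take_succ_eq_cons _ s)

theorem stmt5_general (e b : ℕ) (hb : 0 < b) (L : Type) [Fintype L]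
    (T' : Set (Fin e → ℕ))
    (hT' : HasBranching T' (b * Fintype.card L ^ (e + 1)))
    (lab : (x : Fin (e + 1)) → (Fin (x : ℕ) → ℕ) → L) :
    ∃ T : Set (Fin e → ℕ), T ⊆ T' ∧ HasBranching T b ∧ ConstPerLevel T lab := by
  obtain ⟨T, hsub, hT, f, hf⟩ := exists_subset_hasBranching_forall_lab_eq hb T' lab hT'.1
    fun x s hs => (hT'.2 x s hs).ge
  exact ⟨T, hsub, hT, fun x s hs t ht => (hf x s hs).trans (hf x t ht).symm⟩

/-- Finitary extraction lemma: from a signature tree `T'` of branching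
`b·|L|^(d/2+1)` (with `d = 2e`) with an inner labelling by the finite set `L`, one
can extract a subtree `T ⊆ T'` of branching exactly `b` on which the labelling is
constant per level. -/
theorem stmt5 (e b : ℕ) (hb : 0 < b) (L : Type) [Fintype L] [Nonempty L]
    (T' : Set (Fin e → ℕ))
    (hT' : HasBranching T' (b * Fintype.card L ^ (e + 1)))
    (lab : (x : Fin (e + 1)) → (Fin (x : ℕ) → ℕ) → L) :
    ∃ T : Set (Fin e → ℕ), T ⊆ T' ∧ HasBranching T b ∧ ConstPerLevel T lab :=
  stmt5_general e b hb L T' hT' lab
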